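/- arXiv:2211.08911 — 4 statements merged into one kernel-verified Lean document; each statement's English description precedes it below -/
import Mathlib

section
/- There exists a global minimizer x* of f over the unit box [0,1]^n such that x*_i ∈ {0,1} for every index i with Q_ii ≤ 0. -/
/-- The BoxQP objective function f(x) = (1/2) xᵀQx + cᵀx. -/
noncomputable def boxQPObj {n : ℕ} (Q : Matrix (Fin n) (Fin n) ℝ) (c : Fin n → ℝ)
    (x : Fin n → ℝ) : ℝ :=
  (1 / 2) * ∑ i, ∑ j, Q i j * x i * x j + ∑ i, c i * x i

/-- Membership in the unit box [0,1]^n. -/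
def unitBox {n : ℕ} (x : Fin n → ℝ) : Prop := ∀ i, 0 ≤ x i ∧ x i ≤ 1

/-!
Along the `i`-th coordinate direction, `f` is a quadratic in one variable with leading
coefficient `Q i i / 2`, hence concave when `Q i i ≤ 0`, and a concave function on `[0, 1]` is
bounded below by its value at `0` or at `1`. Starting from any minimizer (the box is compact),
move the coordinates with `Q i i ≤ 0` to `0` or `1` one at a time: each move keeps the point in
the box and does not increase `f`, so it stays a minimizer.
-/

open Set Function Matrix

section CoordinatewiseConcave

variable {ι : Type*} [DecidableEq ι]

lemma ConcaveOn.exists_update_le_of_mem_Icc {f : (ι → ℝ) → ℝ} {x : ι → ℝ} {i : ι}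
    (hf : ConcaveOn ℝ (Icc 0 1) fun t => f (update x i t)) (hx : x i ∈ Icc 0 1) :
    ∃ t : ℝ, (t = 0 ∨ t = 1) ∧ f (update x i t) ≤ f x := by
  have hmin := hf.min_le_of_mem_Icc (left_mem_Icc.2 zero_le_one) (right_mem_Icc.2 zero_le_one) hx
  rw [update_eq_self] at hmin
  rcases min_choice (f (update x i 0)) (f (update x i 1)) with h | h
  · exact ⟨0, Or.inl rfl, h ▸ hmin⟩
  · exact ⟨1, Or.inr rfl, h ▸ hmin⟩

theorem exists_isMinOn_Icc_of_concaveOn_update {f : (ι → ℝ) → ℝ} (hf : ContinuousOn f (Icc 0 1))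
    (s : Finset ι)
    (hconc : ∀ i ∈ s, ∀ x ∈ Icc (0 : ι → ℝ) 1, ConcaveOn ℝ (Icc 0 1) fun t => f (update x i t)) :
    ∃ x ∈ Icc (0 : ι → ℝ) 1, IsMinOn f (Icc 0 1) x ∧ ∀ i ∈ s, x i = 0 ∨ x i = 1 := by
  induction s using Finset.induction_on with
  | empty =>
    obtain ⟨x, hx, hmin⟩ := isCompact_Icc.exists_isMinOn (nonempty_Icc.2 zero_le_one) hf
    exact ⟨x, hx, hmin, by simp⟩
  | @insert i s _ ih =>
    obtain ⟨x, hx, hmin, hends⟩ := ih fun j hj => hconc j (Finset.mem_insert_of_mem hj)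
    obtain ⟨t, ht, hle⟩ := (hconc i (Finset.mem_insert_self i s) x hx).exists_update_le_of_mem_Icc
      ⟨hx.1 i, hx.2 i⟩
    refine ⟨update x i t, ?_, fun y hy => hle.trans (hmin hy), ?_⟩
    · have ht01 : t ∈ Icc (0 : ℝ) 1 := by rcases ht with rfl | rfl <;> simp
      rw [← pi_univ_Icc] at hx ⊢
      exact (update_mem_pi_iff_of_mem hx).2 fun _ => ht01
    · intro j hj
      rcases eq_or_ne j i with rfl | hji
      · simpa using ht
      · simpa [hji] using hends j ((Finset.mem_insert.1 hj).resolve_left hji)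

end CoordinatewiseConcave

lemma concaveOn_quadratic {a : ℝ} (ha : a ≤ 0) (b e : ℝ) :
    ConcaveOn ℝ univ fun t : ℝ => a * t ^ 2 + b * t + e := by
  refine ⟨convex_univ, fun x _ y _ p q hp hq hpq => ?_⟩
  obtain rfl : q = 1 - p := by linarith
  simp only [smul_eq_mul]
  nlinarith [mul_nonpos_of_nonpos_of_nonneg ha (mul_nonneg (mul_nonneg hp hq) (sq_nonneg (x - y)))]

section BoxQP

variable {n : ℕ} (Q : Matrix (Fin n) (Fin n) ℝ) (c : Fin n → ℝ)

lemma boxQPObj_eq_dotProduct (x : Fin n → ℝ) :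
    boxQPObj Q c x = 1 / 2 * (x ⬝ᵥ Q *ᵥ x) + c ⬝ᵥ x := by
  simp only [boxQPObj, dotProduct, mulVec, Finset.mul_sum]
  congr 2 with i
  exact Finset.sum_congr rfl fun j _ => by ring

lemma boxQPObj_add_single (y : Fin n → ℝ) (i : Fin n) (t : ℝ) :
    boxQPObj Q c (y + Pi.single i t) =
      Q i i / 2 * t ^ 2 + (((Q *ᵥ y) i + (y ᵥ* Q) i) / 2 + c i) * t + boxQPObj Q c y := by
  simp only [boxQPObj_eq_dotProduct, vecMul, mulVec_add, mulVec_single, col_apply', op_smul_eq_smul,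
    dotProduct_add, add_dotProduct, single_dotProduct, dotProduct_smul, smul_eq_mul,
    dotProduct_single]
  ring

lemma concaveOn_boxQPObj_update {i : Fin n} (hQ : Q i i ≤ 0) (x : Fin n → ℝ) :
    ConcaveOn ℝ univ fun t => boxQPObj Q c (update x i t) := by
  have hsplit : ∀ t, update x i t = update x i 0 + Pi.single i t := fun t => by
    ext j
    rcases eq_or_ne j i with rfl | hji <;> simp [*]
  rw [show (fun t => boxQPObj Q c (update x i t)) =
      fun t => boxQPObj Q c (update x i 0 + Pi.single i t) from funext fun t => congrArg _ (hsplit t)]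
  simp only [boxQPObj_add_single]
  exact concaveOn_quadratic (by linarith) _ _

lemma continuous_boxQPObj : Continuous (boxQPObj Q c) := by
  unfold boxQPObj
  fun_prop

end BoxQP

lemma unitBox_iff_mem_Icc {n : ℕ} {x : Fin n → ℝ} : unitBox x ↔ x ∈ Icc 0 1 := by
  simp [unitBox, Pi.le_def, forall_and]

theorem stmt_0_general {n : ℕ} (Q : Matrix (Fin n) (Fin n) ℝ) (c : Fin n → ℝ) :
    ∃ xstar : Fin n → ℝ, unitBox xstar ∧
      (∀ y : Fin n → ℝ, unitBox y → boxQPObj Q c xstar ≤ boxQPObj Q c y) ∧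
      (∀ i : Fin n, Q i i ≤ 0 → xstar i = 0 ∨ xstar i = 1) := by
  obtain ⟨x, hx, hmin, hends⟩ := exists_isMinOn_Icc_of_concaveOn_update
    (continuous_boxQPObj Q c).continuousOn {i | Q i i ≤ 0}
    fun i hi x _ => (concaveOn_boxQPObj_update Q c (by simpa using hi) x).subset (subset_univ _)
      (convex_Icc 0 1)
  exact ⟨x, unitBox_iff_mem_Icc.2 hx, fun y hy => hmin (unitBox_iff_mem_Icc.1 hy),
    fun i hi => hends i (by simpa using hi)⟩

/-- There exists a global minimizer x* of f over the unit box [0,1]^n such that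
x*_i ∈ {0,1} for every index i with Q_ii ≤ 0. -/
theorem stmt_0 {n : ℕ} (Q : Matrix (Fin n) (Fin n) ℝ) (hQ : Q.IsSymm) (c : Fin n → ℝ) :
    ∃ xstar : Fin n → ℝ, unitBox xstar ∧
      (∀ y : Fin n → ℝ, unitBox y → boxQPObj Q c xstar ≤ boxQPObj Q c y) ∧
      (∀ i : Fin n, Q i i ≤ 0 → xstar i = 0 ∨ xstar i = 1) :=
  stmt_0_general Q c
end

section
/- If x ∈ [0,1]^n is a local minimizer of f on the unit box [0,1]^n and Q_ii < 0 for some index i, then x_i ∈ {0,1}. -/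
open Finset

theorem boxQPObj_add_add_boxQPObj_sub {n : ℕ} (Q : Matrix (Fin n) (Fin n) ℝ)
    (c x v : Fin n → ℝ) :
    boxQPObj Q c (x + v) + boxQPObj Q c (x - v) =
      2 * boxQPObj Q c x + ∑ i, ∑ j, Q i j * v i * v j := by
  have hQ : ∀ i j, Q i j * (x + v) i * (x + v) j + Q i j * (x - v) i * (x - v) j =
      2 * (Q i j * x i * x j) + 2 * (Q i j * v i * v j) := fun i j => by
    simp only [Pi.add_apply, Pi.sub_apply]; ring
  have hc : ∀ i, c i * (x + v) i + c i * (x - v) i = 2 * (c i * x i) := fun i => by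
    simp only [Pi.add_apply, Pi.sub_apply]; ring
  have hQsum : ∑ i, ∑ j, Q i j * (x + v) i * (x + v) j +
      ∑ i, ∑ j, Q i j * (x - v) i * (x - v) j =
      2 * ∑ i, ∑ j, Q i j * x i * x j + 2 * ∑ i, ∑ j, Q i j * v i * v j := by
    simp only [← sum_add_distrib, hQ, mul_sum]
  have hcsum : ∑ i, c i * (x + v) i + ∑ i, c i * (x - v) i = 2 * ∑ i, c i * x i := by
    simp only [← sum_add_distrib, hc, mul_sum]
  simp only [boxQPObj]
  linear_combination (1 / 2 : ℝ) * hQsum + hcsum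

theorem sum_sum_mul_single_mul_single {n : ℕ} (Q : Matrix (Fin n) (Fin n) ℝ) (i : Fin n)
    (t : ℝ) :
    ∑ a, ∑ b, Q a b * (Pi.single i t : Fin n → ℝ) a * (Pi.single i t : Fin n → ℝ) b =
      Q i i * t ^ 2 := by
  simp [Pi.single_apply, sq, mul_assoc]

theorem boxQPObj_add_single_add_boxQPObj_sub_single {n : ℕ} (Q : Matrix (Fin n) (Fin n) ℝ)
    (c x : Fin n → ℝ) (i : Fin n) (t : ℝ) :
    boxQPObj Q c (x + Pi.single i t) + boxQPObj Q c (x - Pi.single i t) =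
      2 * boxQPObj Q c x + Q i i * t ^ 2 := by
  rw [boxQPObj_add_add_boxQPObj_sub, sum_sum_mul_single_mul_single]

theorem boxQPObj_add_single_lt_or_boxQPObj_sub_single_lt {n : ℕ}
    (Q : Matrix (Fin n) (Fin n) ℝ) (c x : Fin n → ℝ) {i : Fin n} (hi : Q i i < 0) {t : ℝ}
    (ht : t ≠ 0) :
    boxQPObj Q c (x + Pi.single i t) < boxQPObj Q c x ∨
      boxQPObj Q c (x - Pi.single i t) < boxQPObj Q c x := by
  by_contra! h
  have hcurv : Q i i * t ^ 2 < 0 := mul_neg_of_neg_of_pos hi (by positivity)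
  linarith [boxQPObj_add_single_add_boxQPObj_sub_single Q c x i t]

theorem unitBox_add_single {n : ℕ} {x : Fin n → ℝ} (hx : unitBox x) {i : Fin n} {t : ℝ}
    (h₀ : 0 ≤ x i + t) (h₁ : x i + t ≤ 1) : unitBox (x + Pi.single i t) := by
  intro j
  rcases eq_or_ne j i with rfl | hj
  · simpa using ⟨h₀, h₁⟩
  · simpa [hj] using hx j

theorem dist_add_single_self {n : ℕ} (x : Fin n → ℝ) (i : Fin n) (t : ℝ) :
    dist (x + Pi.single i t) x = |t| := by
  simp [dist_eq_norm, Pi.norm_single]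

theorem stmt_1_general {n : ℕ} (Q : Matrix (Fin n) (Fin n) ℝ) (c : Fin n → ℝ)
    (x : Fin n → ℝ) (hx : unitBox x)
    (hloc : ∃ ε > (0 : ℝ), ∀ y : Fin n → ℝ, unitBox y → dist y x < ε →
      boxQPObj Q c x ≤ boxQPObj Q c y)
    (i : Fin n) (hi : Q i i < 0) :
    x i = 0 ∨ x i = 1 := by
  by_contra! h
  obtain ⟨ε, hε, hmin⟩ := hloc
  have hx₀ : 0 < x i := (hx i).1.lt_of_ne' h.1
  have hx₁ : x i < 1 := (hx i).2.lt_of_ne h.2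
  obtain ⟨t, ht, htx₀, htx₁, htε⟩ : ∃ t : ℝ, 0 < t ∧ t ≤ x i ∧ t ≤ 1 - x i ∧ t < ε :=
    ⟨min (min (x i) (1 - x i)) (ε / 2), by positivity, by simp, by simp, by simp [hε]⟩
  have hplus := hmin (x + Pi.single i t) (unitBox_add_single hx (by linarith) (by linarith))
    (by rwa [dist_add_single_self, abs_of_pos ht])
  have hminus := hmin (x + Pi.single i (-t)) (unitBox_add_single hx (by linarith) (by linarith))
    (by rwa [dist_add_single_self, abs_neg, abs_of_pos ht])
  rw [Pi.single_neg, ← sub_eq_add_neg] at hminus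
  rcases boxQPObj_add_single_lt_or_boxQPObj_sub_single_lt Q c x hi ht.ne' with hlt | hlt
  · exact hplus.not_gt hlt
  · exact hminus.not_gt hlt

/-- If x ∈ [0,1]^n is a local minimizer of f on the unit box [0,1]^n and Q_ii < 0
for some index i, then x_i ∈ {0,1}. -/
theorem stmt_1 {n : ℕ} (Q : Matrix (Fin n) (Fin n) ℝ) (hQ : Q.IsSymm) (c : Fin n → ℝ)
    (x : Fin n → ℝ) (hx : unitBox x)
    (hloc : ∃ ε > (0 : ℝ), ∀ y : Fin n → ℝ, unitBox y → dist y x < ε →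
      boxQPObj Q c x ≤ boxQPObj Q c y)
    (i : Fin n) (hi : Q i i < 0) :
    x i = 0 ∨ x i = 1 :=
  stmt_1_general Q c x hx hloc i hi
end

section
/- Safe lower bound from LP post-processing: let Q be a real symmetric n×n matrix, c ∈ ℝ^n, and set Q̃ = (1/2)[[0, cᵀ],[c, Q]]. Let B^1, …, B^m be symmetric (n+1)×(n+1) matrices and b ∈ ℝ^m such that for every x ∈ [0,1]^n the matrix X̃(x) = [[1, xᵀ],[x, x xᵀ]] satisfies B^i • X̃(x) ≥ b_i for all i. Let Z̃ be a symmetric positive semidefinite (n+1)×(n+1) matrix and suppose (y, v, S) with y ∈ ℝ, v ∈ ℝ^m, v ≥ 0, and S symmetric entrywise nonnegative satisfies y E_11 + Σ_{i=1}^m v_i B^i + S = Q̃ − Z̃. Then y + bᵀv ≤ (1/2) xᵀQx + cᵀx for every x ∈ [0,1]^n; in particular y + bᵀv is a valid lower bound on the optimal value of the BoxQP problem. -/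
/-- The trace inner product A • B = Σ_{i,j} A_ij B_ij of two symmetric real matrices. -/
noncomputable def traceIP {m : Type*} [Fintype m] (A B : Matrix m m ℝ) : ℝ :=
  ∑ i, ∑ j, A i j * B i j

/-- The rank-one lifting X̃(x) = [[1, xᵀ],[x, x xᵀ]] of a vector x. -/
def liftMat {n : ℕ} (x : Fin n → ℝ) : Matrix (Unit ⊕ Fin n) (Unit ⊕ Fin n) ℝ :=
  Matrix.fromBlocks (fun _ _ => 1) (fun _ j => x j) (fun i _ => x i) (Matrix.vecMulVec x x)

/-- The matrix Q̃ = (1/2)[[0, cᵀ],[c, Q]]. -/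
noncomputable def Qtilde {n : ℕ} (Q : Matrix (Fin n) (Fin n) ℝ) (c : Fin n → ℝ) :
    Matrix (Unit ⊕ Fin n) (Unit ⊕ Fin n) ℝ :=
  (1 / 2 : ℝ) • Matrix.fromBlocks 0 (fun _ j => c j) (fun i _ => c i) Q

/-- The matrix E_11 which is all zeros except the (1,1)-entry, which equals 1. -/
def E11' (n : ℕ) : Matrix (Unit ⊕ Fin n) (Unit ⊕ Fin n) ℝ :=
  fun i j => if i = Sum.inl () ∧ j = Sum.inl () then 1 else 0

/-!
Pair both sides of the dual identity `y E₁₁ + Σ vᵢ Bⁱ + S = Q̃ - Z̃` with the lifting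
`X̃(x) = w wᵀ`, `w = (1, x)`. This gives `y + Σ vᵢ (Bⁱ • X̃) + S • X̃ = f(x) - wᵀ Z̃ w`.
Validity and `v ≥ 0` bound the middle sum below by `bᵀv`, `S • X̃ ≥ 0` because both matrices
are entrywise nonnegative on the box, and `wᵀ Z̃ w ≥ 0` because `Z̃ ⪰ 0`.
-/

open Matrix

section TraceInnerProduct

variable {k : Type*} [Fintype k]

noncomputable def traceIPLeft (X : Matrix k k ℝ) : Matrix k k ℝ →ₗ[ℝ] ℝ where
  toFun A := traceIP A X
  map_add' A B := by simp only [traceIP, Matrix.add_apply, add_mul, Finset.sum_add_distrib]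
  map_smul' r A := by
    simp only [traceIP, Matrix.smul_apply, smul_eq_mul, mul_assoc, Finset.mul_sum,
      RingHom.id_apply]

@[simp]
lemma traceIPLeft_apply (X A : Matrix k k ℝ) : traceIPLeft X A = traceIP A X := rfl

lemma traceIP_nonneg_of_entrywise_nonneg {A X : Matrix k k ℝ} (hA : ∀ i j, 0 ≤ A i j)
    (hX : ∀ i j, 0 ≤ X i j) : 0 ≤ traceIP A X :=
  Finset.sum_nonneg fun i _ => Finset.sum_nonneg fun j _ => mul_nonneg (hA i j) (hX i j)

lemma traceIP_vecMulVec_self (A : Matrix k k ℝ) (w : k → ℝ) :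
    traceIP A (vecMulVec w w) = w ⬝ᵥ A *ᵥ w := by
  simp only [traceIP, vecMulVec_apply, dotProduct, mulVec, Finset.mul_sum]
  exact Finset.sum_congr rfl fun i _ => Finset.sum_congr rfl fun j _ => by ring

lemma Matrix.PosSemidef.traceIP_vecMulVec_self_nonneg {Z : Matrix k k ℝ} (hZ : Z.PosSemidef)
    (w : k → ℝ) : 0 ≤ traceIP Z (vecMulVec w w) := by
  simpa [traceIP_vecMulVec_self] using hZ.dotProduct_mulVec_nonneg w

end TraceInnerProduct

section Lifting

variable {n : ℕ}

lemma liftMat_eq_vecMulVec (x : Fin n → ℝ) :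
    liftMat x = vecMulVec (Sum.elim 1 x) (Sum.elim 1 x) := by
  ext (i | i) (j | j) <;> simp [liftMat, fromBlocks, vecMulVec_apply]

lemma liftMat_nonneg {x : Fin n → ℝ} (hx : unitBox x) (i j : Unit ⊕ Fin n) :
    0 ≤ liftMat x i j := by
  have hw : ∀ i, 0 ≤ (Sum.elim 1 x : Unit ⊕ Fin n → ℝ) i := by
    rintro (_ | i)
    exacts [zero_le_one, (hx i).1]
  rw [liftMat_eq_vecMulVec, vecMulVec_apply]
  exact mul_nonneg (hw i) (hw j)

lemma traceIP_E11'_liftMat (x : Fin n → ℝ) : traceIP (E11' n) (liftMat x) = 1 := by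
  simp [traceIP, E11', liftMat, fromBlocks, Fintype.sum_sum_type]

lemma traceIP_Qtilde_liftMat (Q : Matrix (Fin n) (Fin n) ℝ) (c x : Fin n → ℝ) :
    traceIP (Qtilde Q c) (liftMat x) = boxQPObj Q c x := by
  simp only [traceIP, Qtilde, one_div, fromBlocks, Matrix.smul_apply, of_apply, smul_eq_mul,
    liftMat, Fintype.sum_sum_type, Finset.univ_unique, PUnit.default_eq_unit,
    Finset.sum_singleton, Finset.sum_add_distrib, Sum.elim_inl, Matrix.zero_apply, mul_zero,
    mul_one, Finset.sum_const_zero, Sum.elim_inr, zero_add, vecMulVec_apply, boxQPObj,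
    Finset.mul_sum]
  simp only [mul_assoc, ← Finset.mul_sum]
  ring

end Lifting

theorem stmt_13_general {n m : ℕ} (Q : Matrix (Fin n) (Fin n) ℝ) (c : Fin n → ℝ)
    (B : Fin m → Matrix (Unit ⊕ Fin n) (Unit ⊕ Fin n) ℝ)
    (b : Fin m → ℝ)
    (hvalid : ∀ x : Fin n → ℝ, unitBox x → ∀ i, b i ≤ traceIP (B i) (liftMat x))
    (Zt : Matrix (Unit ⊕ Fin n) (Unit ⊕ Fin n) ℝ) (hZt : Zt.PosSemidef)
    (y : ℝ) (v : Fin m → ℝ) (hv : ∀ i, 0 ≤ v i)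
    (S : Matrix (Unit ⊕ Fin n) (Unit ⊕ Fin n) ℝ)
    (hSnn : ∀ i j, 0 ≤ S i j)
    (hdual : y • E11' n + ∑ i, v i • B i + S = Qtilde Q c - Zt) :
    ∀ x : Fin n → ℝ, unitBox x → y + ∑ i, b i * v i ≤ boxQPObj Q c x := by
  intro x hx
  have hpaired := congrArg (traceIPLeft (liftMat x)) hdual
  simp only [map_add, map_sub, map_smul, map_sum, traceIPLeft_apply, traceIP_E11'_liftMat,
    traceIP_Qtilde_liftMat, smul_eq_mul, mul_one] at hpaired
  have hS : 0 ≤ traceIP S (liftMat x) :=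
    traceIP_nonneg_of_entrywise_nonneg hSnn (liftMat_nonneg hx)
  have hZ : 0 ≤ traceIP Zt (liftMat x) := by
    rw [liftMat_eq_vecMulVec]
    exact hZt.traceIP_vecMulVec_self_nonneg _
  have hBv : ∑ i, b i * v i ≤ ∑ i, v i * traceIP (B i) (liftMat x) :=
    Finset.sum_le_sum fun i _ => by
      rw [mul_comm (v i)]
      exact mul_le_mul_of_nonneg_right (hvalid x hx i) (hv i)
  linarith

/-- Safe lower bound from LP post-processing: if the constraints B^i • X̃ ≥ b_i are valid
for all rank-one liftings X̃(x) of points x of the unit box, Z̃ ⪰ 0, v ≥ 0, S entrywise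
nonnegative and y E_11 + Σ v_i B^i + S = Q̃ − Z̃, then y + bᵀv ≤ (1/2) xᵀQx + cᵀx for
every x ∈ [0,1]^n, i.e. y + bᵀv is a valid lower bound on the optimal value of BoxQP. -/
theorem stmt_13 {n m : ℕ} (Q : Matrix (Fin n) (Fin n) ℝ) (hQ : Q.IsSymm) (c : Fin n → ℝ)
    (B : Fin m → Matrix (Unit ⊕ Fin n) (Unit ⊕ Fin n) ℝ) (hB : ∀ i, (B i).IsSymm)
    (b : Fin m → ℝ)
    (hvalid : ∀ x : Fin n → ℝ, unitBox x → ∀ i, b i ≤ traceIP (B i) (liftMat x))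
    (Zt : Matrix (Unit ⊕ Fin n) (Unit ⊕ Fin n) ℝ) (hZt : Zt.PosSemidef)
    (y : ℝ) (v : Fin m → ℝ) (hv : ∀ i, 0 ≤ v i)
    (S : Matrix (Unit ⊕ Fin n) (Unit ⊕ Fin n) ℝ) (hSsymm : S.IsSymm)
    (hSnn : ∀ i j, 0 ≤ S i j)
    (hdual : y • E11' n + ∑ i, v i • B i + S = Qtilde Q c - Zt) :
    ∀ x : Fin n → ℝ, unitBox x → y + ∑ i, b i * v i ≤ boxQPObj Q c x :=
  stmt_13_general Q c B b hvalid Zt hZt y v hv S hSnn hdual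
end

section
/- Correctness of the per-coordinate MILP linearization of the KKT conditions: let Q be a real n×n matrix, c ∈ ℝ^n, x ∈ [0,1]^n, i an index, and set (Qx)_i = Σ_j Q_ij x_j, ℓ_i = Σ_{j : Q_ij < 0} Q_ij, u_i = Σ_{j : Q_ij > 0} Q_ij. Then there exist δ, ρ, ξ ∈ {0,1} with δ + ρ + ξ = 1 satisfying x_i ≤ 1 − δ, (Qx)_i ≥ ℓ_i(1 − δ) − δ c_i, x_i ≥ ρ, (Qx)_i ≤ u_i(1 − ρ) − ρ c_i, (Qx)_i ≤ u_i(1 − ξ) − ξ c_i, and (Qx)_i ≥ ℓ_i(1 − ξ) − ξ c_i, if and only if (x_i = 0 and (Qx)_i ≥ −c_i) or (x_i = 1 and (Qx)_i ≤ −c_i) or ((Qx)_i = −c_i). -/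
section BoxBounds

variable {ι R : Type*} [Fintype ι] [CommRing R] [LinearOrder R] [IsStrictOrderedRing R]
  {a x : ι → R}

theorem sum_filter_neg_le_sum_mul (h0 : 0 ≤ x) (h1 : x ≤ 1) :
    ∑ j ∈ Finset.univ.filter (fun j => a j < 0), a j ≤ ∑ j, a j * x j := by
  rw [Finset.sum_filter]
  refine Finset.sum_le_sum fun j _ => ?_
  split_ifs with ha
  · exact le_mul_of_le_one_right ha.le (h1 j)
  · exact mul_nonneg (not_lt.1 ha) (h0 j)

theorem sum_mul_le_sum_filter_pos (h0 : 0 ≤ x) (h1 : x ≤ 1) :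
    ∑ j, a j * x j ≤ ∑ j ∈ Finset.univ.filter (fun j => 0 < a j), a j := by
  rw [Finset.sum_filter]
  refine Finset.sum_le_sum fun j _ => ?_
  split_ifs with ha
  · exact mul_le_of_le_one_right ha.le (h1 j)
  · exact mul_nonpos_of_nonpos_of_nonneg (not_lt.1 ha) (h0 j)

end BoxBounds

/-- With `s` the value of `(Qx)ᵢ` and `l ≤ s ≤ u` its box bounds, the big-M constraints switched
on by `δ`, `ρ`, `ξ` encode the three KKT cases; the constraints switched off are implied by
`l ≤ s ≤ u` and `0 ≤ t ≤ 1`. -/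
theorem exists_binary_kkt_linearization_iff {t s l u c : ℝ} (ht0 : 0 ≤ t) (ht1 : t ≤ 1)
    (hl : l ≤ s) (hu : s ≤ u) :
    (∃ δ ρ ξ : ℝ, (δ = 0 ∨ δ = 1) ∧ (ρ = 0 ∨ ρ = 1) ∧ (ξ = 0 ∨ ξ = 1) ∧
      δ + ρ + ξ = 1 ∧ t ≤ 1 - δ ∧ l * (1 - δ) - δ * c ≤ s ∧
      ρ ≤ t ∧ s ≤ u * (1 - ρ) - ρ * c ∧
      s ≤ u * (1 - ξ) - ξ * c ∧ l * (1 - ξ) - ξ * c ≤ s) ↔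
    ((t = 0 ∧ -c ≤ s) ∨ (t = 1 ∧ s ≤ -c) ∨ s = -c) := by
  constructor
  · rintro ⟨δ, ρ, ξ, hδ | rfl | rfl, hρ | rfl | rfl, hξ | rfl | rfl, hsum, h1, h2, h3, h4, h5, h6⟩
      <;> subst_vars <;> norm_num at hsum
    · exact Or.inr (Or.inr (by linarith))
    · exact Or.inr (Or.inl ⟨by linarith, by linarith⟩)
    · exact Or.inl ⟨by linarith, by linarith⟩
  · rintro (⟨rfl, hc⟩ | ⟨rfl, hc⟩ | hc)
    · exact ⟨1, 0, 0, by norm_num, by norm_num, by norm_num, by norm_num, by norm_num,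
        by linarith, by norm_num, by linarith, by linarith, by linarith⟩
    · exact ⟨0, 1, 0, by norm_num, by norm_num, by norm_num, by norm_num, by norm_num,
        by linarith, by norm_num, by linarith, by linarith, by linarith⟩
    · exact ⟨0, 0, 1, by norm_num, by norm_num, by norm_num, by norm_num, by linarith,
        by linarith, by linarith, by linarith, by linarith, by linarith⟩

/-- Correctness of the per-coordinate MILP linearization of the KKT conditions of BoxQP:
with (Qx)_i = Σ_j Q_ij x_j, ℓ_i = Σ_{j : Q_ij < 0} Q_ij, u_i = Σ_{j : Q_ij > 0} Q_ij,
there exist binary δ, ρ, ξ with δ + ρ + ξ = 1 satisfying the six linearized constraints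
iff (x_i = 0 and (Qx)_i ≥ −c_i) or (x_i = 1 and (Qx)_i ≤ −c_i) or ((Qx)_i = −c_i). -/
theorem stmt_19 {n : ℕ} (Q : Matrix (Fin n) (Fin n) ℝ) (c : Fin n → ℝ)
    (x : Fin n → ℝ) (hx : unitBox x) (i : Fin n) :
    (∃ δ ρ ξ : ℝ, (δ = 0 ∨ δ = 1) ∧ (ρ = 0 ∨ ρ = 1) ∧ (ξ = 0 ∨ ξ = 1) ∧
      δ + ρ + ξ = 1 ∧
      x i ≤ 1 - δ ∧
      (∑ j ∈ Finset.univ.filter (fun j => Q i j < 0), Q i j) * (1 - δ) - δ * c i ≤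
        ∑ j, Q i j * x j ∧
      ρ ≤ x i ∧
      (∑ j, Q i j * x j) ≤
        (∑ j ∈ Finset.univ.filter (fun j => 0 < Q i j), Q i j) * (1 - ρ) - ρ * c i ∧
      (∑ j, Q i j * x j) ≤
        (∑ j ∈ Finset.univ.filter (fun j => 0 < Q i j), Q i j) * (1 - ξ) - ξ * c i ∧
      (∑ j ∈ Finset.univ.filter (fun j => Q i j < 0), Q i j) * (1 - ξ) - ξ * c i ≤
        ∑ j, Q i j * x j) ↔
    ((x i = 0 ∧ -c i ≤ ∑ j, Q i j * x j) ∨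
     (x i = 1 ∧ (∑ j, Q i j * x j) ≤ -c i) ∨
     (∑ j, Q i j * x j) = -c i) := by
  have h0 : 0 ≤ x := fun j => (hx j).1
  have h1 : x ≤ 1 := fun j => (hx j).2
  exact exists_binary_kkt_linearization_iff (hx i).1 (hx i).2
    (sum_filter_neg_le_sum_mul h0 h1) (sum_mul_le_sum_filter_pos h0 h1)
end
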